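/- arXiv:2309.15404 — 3 statements merged into one kernel-verified Lean document; each statement's English description precedes it below -/
import Mathlib

section
/- Let A be a finitely generated graded k-algebra of Krull dimension r which is an integral domain, and B ⊂ A a finitely generated graded subalgebra of the same Krull dimension with [KP(A):KP(B)] finite. Then s_A·Vol(A) ≥ [KP(A):KP(B)] · s_B·Vol(B), where s_A, s_B are the saturators of A and B. In particular [KP(A):KP(B)] ≤ s_A Vol(A)/(s_B Vol(B)). -/
open Filter
open scoped Classical
set_option synthInstance.maxHeartbeats 1000000
set_option maxHeartbeats 1000000

/-- The set of fractions `a/b` with `a, b` homogeneous of the same degree in the graded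
family `ℱ`, inside the fraction field. -/
def fracSet {k R : Type*} [Field k] [CommRing R] [IsDomain R] [Algebra k R]
    (ℱ : ℕ → Submodule k R) : Set (FractionRing R) :=
  {x | ∃ n : ℕ, ∃ a ∈ ℱ n, ∃ b ∈ ℱ n, b ≠ 0 ∧
    x = algebraMap R (FractionRing R) a / algebraMap R (FractionRing R) b}

/-- `KP(ℱ)`: the rational function field of `Proj` of the graded algebra with pieces `ℱ`,
realized as the subfield of the fraction field generated by quotients of homogeneous
elements of equal degree. -/
noncomputable def KP {k R : Type*} [Field k] [CommRing R] [IsDomain R] [Algebra k R]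
    (ℱ : ℕ → Submodule k R) : Subfield (FractionRing R) :=
  Subfield.closure (fracSet ℱ)

/-!
A basis of `KP(A)` over `KP(B)` can be chosen among fractions of homogeneous elements of `A`;
over a common denominator of degree `N` it embeds `d = [KP(A):KP(B)]` copies of `B_m` into
`A_{m+N}`, and multiplying by nonzero elements of `A_{s_A i}` (which exist for `i ≥ i₁`) gives
`d · dim B_m ≤ dim A_{m + N + s_A i}`. Since `B` lives in degrees divisible by `s_B`, the shifts
`N + s_A (i₁ + j)` for `j < q = s_B / gcd(s_A, s_B)` hit distinct residues mod `s_B`, so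
`H_A(t) ≥ d (∑_{j<q} t^{N + s_A (i₁ + j)}) H_B(t)` for `0 < t < 1` (the series converge because
finite generation makes `dim A_n` polynomially bounded). Multiplying by `(1-t)^r` and letting
`t → 1` gives `q d Vol(B) ≤ Vol(A)`, and `s_A q = lcm(s_A, s_B) ≥ s_B`.
-/

open Module Finset Topology

theorem Nat.eq_zero_or_mem_of_mem_closure {S : Set ℕ} (hS : ∀ m ∈ S, ∀ n ∈ S, m + n ∈ S) {m : ℕ}
    (hm : m ∈ AddSubmonoid.closure S) : m = 0 ∨ m ∈ S := by
  induction hm using AddSubmonoid.closure_induction with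
  | mem x hx => exact .inr hx
  | zero => exact .inl rfl
  | add x y _ _ hx hy =>
    rcases hx with rfl | hx
    · simpa using hy
    rcases hy with rfl | hy
    · exact .inr hx
    exact .inr (hS x hx y hy)

theorem Nat.dvd_of_isLeast_eventually_mul_mem {S : Set ℕ} (hS : ∀ m ∈ S, ∀ n ∈ S, m + n ∈ S)
    {s : ℕ} (hs : IsLeast {m | 0 < m ∧ ∀ᶠ i in atTop, m * i ∈ S} s) {n : ℕ} (hn : n ∈ S) :
    s ∣ n := by
  -- All large multiples of `gcd S` lie in `S`, so minimality of `s` forces `s = gcd S`.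
  obtain ⟨⟨hs0, hsS⟩, hleast⟩ := hs
  obtain ⟨i₀, hi₀⟩ := eventually_atTop.mp hsS
  set g := Nat.setGcd S
  have hgs : g ∣ s := by
    have h1 := Nat.setGcd_dvd_of_mem (hi₀ (i₀ + 1) (by omega))
    rwa [mul_add_one, Nat.dvd_add_right (Nat.setGcd_dvd_of_mem (hi₀ i₀ le_rfl))] at h1
  have hg0 : 0 < g := Nat.pos_of_ne_zero fun h => by
    have := Nat.setGcd_eq_zero_iff.mp h (hi₀ (i₀ + 1) (by omega))
    simp at this
    omega
  obtain ⟨M, hM⟩ := Nat.exists_mem_closure_of_ge S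
  have hg : g ∈ {m | 0 < m ∧ ∀ᶠ i in atTop, m * i ∈ S} := by
    refine ⟨hg0, eventually_atTop.mpr ⟨M + 1, fun i hi => ?_⟩⟩
    have hgi : M ≤ g * i := le_trans (by omega) (Nat.le_mul_of_pos_left i hg0)
    refine (Nat.eq_zero_or_mem_of_mem_closure hS (hM _ hgi (dvd_mul_right g i))).resolve_left ?_
    exact Nat.mul_ne_zero hg0.ne' (by omega)
  have : g = s := le_antisymm (Nat.le_of_dvd hs0 hgs) (hleast hg)
  exact this ▸ Nat.setGcd_dvd_of_mem hn

theorem Nat.eq_and_eq_of_mul_add_mul_eq {a b m m' j j' : ℕ} (hb : 0 < b)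
    (hj : j < b / b.gcd a) (hj' : j' < b / b.gcd a) (h : b * m + a * j = b * m' + a * j') :
    m = m' ∧ j = j' := by
  have hmod : a * j ≡ a * j' [MOD b] := by
    have := congrArg (· % b) h
    simpa [Nat.ModEq, Nat.add_mod] using this
  obtain rfl := (hmod.cancel_left_div_gcd hb).eq_of_lt_of_lt hj hj'
  exact ⟨Nat.eq_of_mul_eq_mul_left hb (by omega), rfl⟩

theorem Nat.le_mul_div_gcd {a b : ℕ} (ha : 0 < a) : b ≤ a * (b / b.gcd a) := by
  rw [← Nat.mul_div_assoc _ (Nat.gcd_dvd_left b a),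
    Nat.le_div_iff_mul_le (Nat.gcd_pos_of_pos_right b ha), mul_comm a]
  exact Nat.mul_le_mul_left b (Nat.gcd_le_right _ ha)

theorem summable_mul_pow_of_le_mul_pow {a : ℕ → ℕ} {C e : ℕ} (ha : ∀ n, a n ≤ C * (n + 1) ^ e)
    {t : ℝ} (ht0 : 0 < t) (ht1 : t < 1) : Summable fun n => (a n : ℝ) * t ^ n := by
  have hgeom : Summable fun n : ℕ => ((n : ℝ) + 1) ^ e * t ^ (n + 1) := by
    simpa using (summable_nat_add_iff (f := fun n : ℕ => (n : ℝ) ^ e * t ^ n) 1).mpr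
      (summable_pow_mul_geometric_of_norm_lt_one e
        (by rw [Real.norm_eq_abs, abs_lt]; constructor <;> linarith))
  refine .of_nonneg_of_le (fun n => by positivity) (fun n => ?_) (hgeom.mul_left (C * t⁻¹))
  have han : (a n : ℝ) ≤ C * ((n : ℝ) + 1) ^ e := by exact_mod_cast ha n
  calc (a n : ℝ) * t ^ n ≤ C * ((n : ℝ) + 1) ^ e * t ^ n :=
        mul_le_mul_of_nonneg_right han (by positivity)
    _ = C * t⁻¹ * (((n : ℝ) + 1) ^ e * t ^ (n + 1)) := by field_simp; ring

theorem mul_tsum_le_tsum_of_injective {a b : ℕ → ℕ} {d p q : ℕ} {E : Fin q → ℕ} (hp : 0 < p)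
    (hE : Function.Injective fun x : ℕ × Fin q => p * x.1 + E x.2)
    (hb : ∀ n, b n ≠ 0 → p ∣ n) (hab : ∀ m j, d * b (p * m) ≤ a (p * m + E j))
    {t : ℝ} (ht : 0 ≤ t) (ha : Summable fun n => (a n : ℝ) * t ^ n) :
    (∑ j, (d : ℝ) * t ^ E j) * ∑' n, (b n : ℝ) * t ^ n ≤ ∑' n, (a n : ℝ) * t ^ n := by
  set f : ℕ × Fin q → ℝ := fun x => (d * b (p * x.1) : ℕ) * t ^ (p * x.1 + E x.2)
  have hfa : ∀ x, f x ≤ (a (p * x.1 + E x.2) : ℝ) * t ^ (p * x.1 + E x.2) := fun x =>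
    mul_le_mul_of_nonneg_right (by exact_mod_cast hab x.1 x.2) (by positivity)
  have hf : Summable f :=
    .of_nonneg_of_le (fun x => by positivity) hfa (ha.comp_injective hE)
  have hb_sum : ∑' m, (b (p * m) : ℝ) * t ^ (p * m) = ∑' n, (b n : ℝ) * t ^ n := by
    refine Function.Injective.tsum_eq (f := fun n => (b n : ℝ) * t ^ n)
      (fun m m' h => Nat.eq_of_mul_eq_mul_left hp h) fun n hn => ?_
    obtain ⟨m, rfl⟩ := hb n fun h => hn (by simp [h])
    exact ⟨m, rfl⟩
  calc (∑ j, (d : ℝ) * t ^ E j) * ∑' n, (b n : ℝ) * t ^ n = ∑' x, f x := by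
        rw [hf.tsum_prod, ← hb_sum, ← tsum_mul_left]
        refine tsum_congr fun m => ?_
        rw [tsum_fintype, sum_mul]
        refine sum_congr rfl fun j _ => ?_
        simp only [f, pow_add]
        push_cast
        ring
    _ ≤ ∑' n, (a n : ℝ) * t ^ n :=
        hf.tsum_le_tsum_of_inj _ hE (fun _ _ => by positivity) hfa ha

theorem mul_mul_volume_le_of_le_shift {a b : ℕ → ℕ} {C e d p s c r : ℕ} {VA VB : ℝ}
    (hp : 0 < p) (hs : 0 < s) (ha : ∀ n, a n ≤ C * (n + 1) ^ e) (hb : ∀ n, b n ≠ 0 → p ∣ n)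
    (hab : ∀ m j, d * b (p * m) ≤ a (p * m + c + s * j))
    (hVA : Tendsto (fun t : ℝ => (1 - t) ^ r * ∑' n, (a n : ℝ) * t ^ n) (𝓝[<] 1) (𝓝 VA))
    (hVB : Tendsto (fun t : ℝ => (1 - t) ^ r * ∑' n, (b n : ℝ) * t ^ n) (𝓝[<] 1) (𝓝 VB)) :
    (d : ℝ) * p * VB ≤ s * VA := by
  set q := p / p.gcd s
  have hE : Function.Injective fun x : ℕ × Fin q => p * x.1 + (c + s * x.2) := by
    rintro ⟨m, j⟩ ⟨m', j'⟩ h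
    obtain ⟨rfl, hj⟩ := Nat.eq_and_eq_of_mul_add_mul_eq (m := m) (m' := m') hp j.2 j'.2
      (by simp only at h; omega)
    exact Prod.ext rfl (Fin.ext hj)
  have hpoly : Tendsto (fun t : ℝ => ∑ j : Fin q, (d : ℝ) * t ^ (c + s * j)) (𝓝[<] 1)
      (𝓝 (q * d)) := by
    have hcont : Continuous fun t : ℝ => ∑ j : Fin q, (d : ℝ) * t ^ (c + s * j) := by fun_prop
    simpa using (hcont.tendsto 1).mono_left nhdsWithin_le_nhds
  have hle : ∀ᶠ t in 𝓝[<] 1, (∑ j : Fin q, (d : ℝ) * t ^ (c + s * j)) *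
      ((1 - t) ^ r * ∑' n, (b n : ℝ) * t ^ n) ≤ (1 - t) ^ r * ∑' n, (a n : ℝ) * t ^ n := by
    filter_upwards [Ioo_mem_nhdsLT (show (0 : ℝ) < 1 by norm_num)] with t ⟨ht0, ht1⟩
    rw [mul_left_comm]
    refine mul_le_mul_of_nonneg_left ?_ (pow_nonneg (sub_nonneg.mpr ht1.le) r)
    exact mul_tsum_le_tsum_of_injective hp hE hb (fun m j => by rw [← add_assoc]; exact hab m j)
      ht0.le (summable_mul_pow_of_le_mul_pow ha ht0 ht1)
  have hqd : q * d * VB ≤ VA := le_of_tendsto_of_tendsto (hpoly.mul hVB) hVA hle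
  have hVB0 : 0 ≤ VB := ge_of_tendsto hVB <| by
    filter_upwards [Ioo_mem_nhdsLT (show (0 : ℝ) < 1 by norm_num)] with t ⟨ht0, ht1⟩
    have : 0 ≤ 1 - t := by linarith
    positivity
  have hpq : (p : ℝ) ≤ s * q := by exact_mod_cast Nat.le_mul_div_gcd hs
  calc (d : ℝ) * p * VB ≤ d * (s * q) * VB := by gcongr
    _ = s * (q * d * VB) := by ring
    _ ≤ s * VA := by gcongr

section GradedPieces

open DirectSum

variable {k R : Type*} [Field k] [CommRing R] [Algebra k R]

theorem Submodule.finrank_mul_le (M N : Submodule k R) [FiniteDimensional k M]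
    [FiniteDimensional k N] :
    finrank k ↥(M * N) ≤ finrank k M * finrank k N := by
  rw [← Submodule.mulMap_range, ← Module.finrank_tensorProduct]
  exact LinearMap.finrank_range_le _

noncomputable def monomialsLE (s : Finset R) (n : ℕ) : Finset R :=
  (Fintype.piFinset fun _ : s => range (n + 1)).image fun f : s → ℕ => ∏ i : s, (i : R) ^ f i

theorem card_monomialsLE_le (s : Finset R) (n : ℕ) : #(monomialsLE s n) ≤ (n + 1) ^ #s :=
  card_image_le.trans (by simp)

variable (𝒜 : ℕ → Submodule k R) [GradedAlgebra 𝒜]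

instance isScalarTower_gradeZero : IsScalarTower k (𝒜 0) R :=
  ⟨fun a b c => smul_mul_assoc a (b : R) c⟩

variable {𝒜} {s : Finset R} {deg : R → ℕ}

theorem exists_mem_monomialsLE_of_mem_closure (hdeg : ∀ i ∈ s, i ∈ 𝒜 (deg i))
    (hpos : ∀ i ∈ s, deg i ≠ 0) {w : R} (hw : w ∈ Submonoid.closure (s : Set R)) :
    ∃ D, w ∈ 𝒜 D ∧ w ∈ monomialsLE s D := by
  obtain ⟨f, -, rfl⟩ := Submonoid.mem_closure_finset.mp hw
  refine ⟨∑ i ∈ s, f i * deg i, ?_, ?_⟩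
  · refine SetLike.prod_mem_graded 𝒜 _ _ fun i hi => ?_
    simpa [smul_eq_mul, mul_comm] using SetLike.pow_mem_graded (f i) (hdeg i hi)
  · refine mem_image.mpr ⟨fun i => f i, Fintype.mem_piFinset.mpr fun i => ?_, ?_⟩
    · have : f i * deg i ≤ ∑ j ∈ s, f j * deg j :=
        single_le_sum (f := fun j => f j * deg j) (fun _ _ => Nat.zero_le _) i.2
      have := Nat.le_mul_of_pos_right (f i) (Nat.pos_of_ne_zero (hpos i i.2))
      simp only [mem_range]
      omega
    · exact prod_coe_sort s fun i => i ^ f i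

theorem decompose_mem_mul_span_monomialsLE (hdeg : ∀ i ∈ s, i ∈ 𝒜 (deg i))
    (hpos : ∀ i ∈ s, deg i ≠ 0) (hs : Algebra.adjoin (𝒜 0) (s : Set R) = ⊤) (x : R) (n : ℕ) :
    (decompose 𝒜 x n : R) ∈ 𝒜 0 * Submodule.span k (monomialsLE s n : Set R) := by
  have hx : x ∈ Submodule.span (𝒜 0) (Submonoid.closure (s : Set R) : Set R) := by
    rw [← Algebra.adjoin_eq_span, hs]; trivial
  induction hx using Submodule.span_induction with
  | mem w hw =>
    obtain ⟨D, hwD, hwmon⟩ := exists_mem_monomialsLE_of_mem_closure hdeg hpos hw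
    by_cases hn : D = n
    · subst hn
      rw [decompose_of_mem_same 𝒜 hwD, ← one_mul w]
      exact Submodule.mul_mem_mul SetLike.GradedOne.one_mem (Submodule.subset_span hwmon)
    · rw [decompose_of_mem_ne 𝒜 hwD hn]
      exact zero_mem _
  | zero => simp
  | add x y _ _ hx hy =>
    rw [decompose_add, DirectSum.add_apply, Submodule.coe_add]
    exact add_mem hx hy
  | smul c x _ hx =>
    change (decompose 𝒜 ((c : R) * x) n : R) ∈ _
    rw [coe_decompose_mul_of_left_mem_zero 𝒜 c.2]
    have h𝒜0 : 𝒜 0 * 𝒜 0 ≤ 𝒜 0 := Submodule.mul_le.mpr fun a ha b hb => by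
      simpa using SetLike.mul_mem_graded ha hb
    have := Submodule.mul_mem_mul c.2 hx
    rw [← mul_assoc] at this
    exact mul_le_mul' h𝒜0 le_rfl this

variable (𝒜) in
theorem exists_finrank_le_mul_pow [Algebra.FiniteType k R] [FiniteDimensional k (𝒜 0)] :
    ∃ e : ℕ, ∀ n, FiniteDimensional k (𝒜 n) ∧
      finrank k (𝒜 n) ≤ finrank k (𝒜 0) * (n + 1) ^ e := by
  have : Algebra.FiniteType (𝒜 0) R := .of_restrictScalars_finiteType k (𝒜 0) R
  obtain ⟨s, hs, hhom⟩ := GradedAlgebra.exists_finset_adjoin_eq_top_and_homogeneous_ne_zero 𝒜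
  choose! deg hpos hdeg using hhom
  refine ⟨#s, fun n => ?_⟩
  have hle : 𝒜 n ≤ 𝒜 0 * Submodule.span k (monomialsLE s n : Set R) := fun x hx => by
    simpa [decompose_of_mem_same 𝒜 hx] using
      decompose_mem_mul_span_monomialsLE hdeg hpos hs x n
  have : FiniteDimensional k ↥(𝒜 0 * Submodule.span k (monomialsLE s n : Set R)) :=
    Module.Finite.iff_fg.mpr ((Module.Finite.iff_fg.mp inferInstance).mul
      (Submodule.fg_span (monomialsLE s n).finite_toSet))
  refine ⟨Submodule.finiteDimensional_of_le hle, ?_⟩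
  calc finrank k (𝒜 n)
      ≤ finrank k ↥(𝒜 0 * Submodule.span k (monomialsLE s n : Set R)) :=
        Submodule.finrank_mono hle
    _ ≤ finrank k (𝒜 0) * #(monomialsLE s n) :=
        (Submodule.finrank_mul_le _ _).trans (Nat.mul_le_mul_left _ (finrank_span_finset_le_card _))
    _ ≤ finrank k (𝒜 0) * (n + 1) ^ #s := Nat.mul_le_mul_left _ (card_monomialsLE_le s n)

end GradedPieces

theorem Submodule.exists_mem_ne_zero_of_finrank_ne_zero {k V : Type*} [Field k] [AddCommGroup V]
    [Module k V] {M : Submodule k V} (h : finrank k M ≠ 0) : ∃ z ∈ M, z ≠ 0 :=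
  Submodule.exists_mem_ne_zero_of_ne_bot fun hM => h (by rw [hM]; simp)

section GradedDomain

variable {k R : Type*} [Field k] [CommRing R] [IsDomain R] [Algebra k R]

theorem finrank_add_ne_zero {ℬ : ℕ → Submodule k R}
    (hmul : ∀ i j : ℕ, ∀ x ∈ ℬ i, ∀ y ∈ ℬ j, x * y ∈ ℬ (i + j)) {m n : ℕ}
    [FiniteDimensional k (ℬ (m + n))] (hm : finrank k (ℬ m) ≠ 0) (hn : finrank k (ℬ n) ≠ 0) :
    finrank k (ℬ (m + n)) ≠ 0 := by
  obtain ⟨x, hx, hx0⟩ := Submodule.exists_mem_ne_zero_of_finrank_ne_zero hm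
  obtain ⟨y, hy, hy0⟩ := Submodule.exists_mem_ne_zero_of_finrank_ne_zero hn
  rw [Ne, Submodule.finrank_eq_zero]
  exact (Submodule.ne_bot_iff _).mpr ⟨x * y, hmul m n x hx y hy, mul_ne_zero hx0 hy0⟩

variable {𝒜 : ℕ → Submodule k R} [GradedAlgebra 𝒜]

theorem exists_injective_linearMap_add {e : ℕ} (he : finrank k (𝒜 e) ≠ 0) (m : ℕ) :
    ∃ f : 𝒜 m →ₗ[k] 𝒜 (m + e), Function.Injective f := by
  obtain ⟨z, hz, hz0⟩ := Submodule.exists_mem_ne_zero_of_finrank_ne_zero he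
  exact ⟨((LinearMap.mulRight k z).domRestrict (𝒜 m)).codRestrict (𝒜 (m + e))
      fun x => SetLike.mul_mem_graded x.2 hz,
    fun x y h => Subtype.ext (mul_right_cancel₀ hz0 (congrArg Subtype.val h))⟩

theorem finiteDimensional_zero_of_finrank_ne_zero {e : ℕ} (he : finrank k (𝒜 e) ≠ 0) :
    FiniteDimensional k (𝒜 0) := by
  obtain ⟨f, hf⟩ := exists_injective_linearMap_add he 0
  have : FiniteDimensional k (𝒜 (0 + e)) := by
    rw [zero_add]; exact Module.finite_of_finrank_pos (Nat.pos_of_ne_zero he)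
  exact .of_injective f hf

theorem finrank_le_finrank_add {e : ℕ} (he : finrank k (𝒜 e) ≠ 0) (m : ℕ)
    [FiniteDimensional k (𝒜 (m + e))] : finrank k (𝒜 m) ≤ finrank k (𝒜 (m + e)) :=
  (exists_injective_linearMap_add he m).elim fun _ hf =>
    LinearMap.finrank_le_finrank_of_injective hf

end GradedDomain

section FunctionField

variable {k R : Type*} [Field k] [CommRing R] [IsDomain R] [Algebra k R]

local notation "ι" => algebraMap R (FractionRing R)

def fracSubmonoid (𝒜 : ℕ → Submodule k R) [GradedAlgebra 𝒜] : Submonoid (FractionRing R) where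
  carrier := fracSet 𝒜
  one_mem' := ⟨0, 1, SetLike.GradedOne.one_mem, 1, SetLike.GradedOne.one_mem, one_ne_zero,
    by simp⟩
  mul_mem' := by
    rintro _ _ ⟨n, a, ha, b, hb, hb0, rfl⟩ ⟨n', a', ha', b', hb', hb0', rfl⟩
    exact ⟨n + n', a * a', SetLike.mul_mem_graded ha ha', b * b', SetLike.mul_mem_graded hb hb',
      mul_ne_zero hb0 hb0', by rw [map_mul, map_mul, div_mul_div_comm]⟩

theorem toSubmodule_adjoin_fracSet (𝒜 : ℕ → Submodule k R) [GradedAlgebra 𝒜]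
    (L : Subfield (FractionRing R))
    [FiniteDimensional L (IntermediateField.adjoin L (fracSet 𝒜))] :
    Subalgebra.toSubmodule (IntermediateField.adjoin L (fracSet 𝒜)).toSubalgebra =
      Submodule.span L (fracSet 𝒜) := by
  have halg : ∀ x ∈ fracSet 𝒜, IsAlgebraic L x := fun x hx =>
    IntermediateField.isAlgebraic_iff.mp
      (Algebra.IsAlgebraic.isAlgebraic (⟨x, IntermediateField.subset_adjoin _ _ hx⟩ :
        IntermediateField.adjoin L (fracSet 𝒜)))
  rw [IntermediateField.adjoin_toSubalgebra_of_isAlgebraic halg, Algebra.adjoin_eq_span]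
  exact congrArg (fun S : Submonoid (FractionRing R) => Submodule.span L (S : Set (FractionRing R)))
    (Submonoid.closure_eq (fracSubmonoid 𝒜))

theorem exists_common_denom_of_mem_fracSet {𝒜 : ℕ → Submodule k R} [GradedAlgebra 𝒜]
    {d : ℕ} {x : Fin d → FractionRing R} (hx : ∀ i, x i ∈ fracSet 𝒜) :
    ∃ N, ∃ B : R, B ≠ 0 ∧ ∃ Y : Fin d → R, ∀ i, Y i ∈ 𝒜 N ∧ ι (Y i) = x i * ι B := by
  choose n a ha b hb hb0 hxab using hx
  refine ⟨∑ i, n i, ∏ i, b i, prod_ne_zero_iff.mpr fun i _ => hb0 i,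
    fun i => a i * ∏ j ∈ univ.erase i, b j, fun i => ⟨?_, ?_⟩⟩
  · rw [← add_sum_erase _ _ (mem_univ i)]
    exact SetLike.mul_mem_graded (ha i) (SetLike.prod_mem_graded 𝒜 n b fun j _ => hb j)
  · have hbi : ι (b i) ≠ 0 := (map_ne_zero_iff _ (IsFractionRing.injective R _)).mpr (hb0 i)
    rw [hxab i, ← mul_prod_erase _ _ (mem_univ i), map_mul, map_mul, map_prod]
    field_simp

theorem eq_zero_of_sum_mul_eq_zero {ℬ : ℕ → Submodule k R} {d : ℕ} {x : Fin d → FractionRing R}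
    (hx : LinearIndependent (KP ℬ) x) {m : ℕ} {c : Fin d → R} (hc : ∀ i, c i ∈ ℬ m)
    (h : ∑ i, ι (c i) * x i = 0) : c = 0 := by
  by_contra hne
  obtain ⟨i₀, hi₀⟩ := Function.ne_iff.mp hne
  have hγ : ι (c i₀) ≠ 0 := (map_ne_zero_iff _ (IsFractionRing.injective R _)).mpr hi₀
  let lam : Fin d → KP ℬ := fun i =>
    ⟨ι (c i) / ι (c i₀), Subfield.subset_closure ⟨m, c i, hc i, c i₀, hc i₀, hi₀, rfl⟩⟩
  have hrel : ∑ i, lam i • x i = 0 := by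
    change ∑ i, ι (c i) / ι (c i₀) * x i = 0
    simp_rw [div_mul_eq_mul_div, ← sum_div, h, zero_div]
  have := congrArg Subtype.val (Fintype.linearIndependent_iff.mp hx lam hrel i₀)
  simp [lam, div_self hγ] at this

theorem exists_mul_finrank_le_finrank_add (𝒜 ℬ : ℕ → Submodule k R) [GradedAlgebra 𝒜]
    (hBA : ∀ i, ℬ i ≤ 𝒜 i) (hfd : ∀ n, FiniteDimensional k (𝒜 n))
    [FiniteDimensional (KP ℬ) (IntermediateField.adjoin (KP ℬ) (fracSet 𝒜))] :
    ∃ N, ∀ m, finrank (KP ℬ) (IntermediateField.adjoin (KP ℬ) (fracSet 𝒜)) * finrank k (ℬ m) ≤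
      finrank k (𝒜 (m + N)) := by
  let e := LinearEquiv.ofEq _ _ (toSubmodule_adjoin_fracSet 𝒜 (KP ℬ))
  have : FiniteDimensional (KP ℬ) (Submodule.span (KP ℬ) (fracSet 𝒜)) := .equiv e
  rw [show finrank _ (IntermediateField.adjoin (KP ℬ) (fracSet 𝒜)) = _ from e.finrank_eq]
  obtain ⟨x, hxmem, -, hxli⟩ := Submodule.exists_fun_fin_finrank_span_eq (KP ℬ) (fracSet 𝒜)
  obtain ⟨N, B, hB0, Y, hY⟩ := exists_common_denom_of_mem_fracSet hxmem
  refine ⟨N, fun m => ?_⟩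
  have : FiniteDimensional k (ℬ m) := Submodule.finiteDimensional_of_le (hBA m)
  let Φ : (Fin _ → ℬ m) →ₗ[k] 𝒜 (m + N) := LinearMap.codRestrict (𝒜 (m + N))
    (∑ i, LinearMap.mulRight k (Y i) ∘ₗ (ℬ m).subtype ∘ₗ LinearMap.proj i)
    (fun c => by
      simp only [LinearMap.sum_apply, LinearMap.comp_apply, LinearMap.proj_apply,
        Submodule.subtype_apply, LinearMap.mulRight_apply]
      exact sum_mem fun i _ => SetLike.mul_mem_graded (hBA m (c i).2) (hY i).1)
  have hΦ : Function.Injective Φ := by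
    rw [← LinearMap.ker_eq_bot, LinearMap.ker_eq_bot']
    intro c hc
    have hsum : ∑ i, (c i : R) * Y i = 0 := by
      simpa [Φ] using congrArg Subtype.val hc
    have hB : ι B ≠ 0 := (map_ne_zero_iff _ (IsFractionRing.injective R _)).mpr hB0
    have hrel : ∑ i, ι (c i) * x i = 0 := by
      have := congrArg ι hsum
      simp only [map_sum, map_mul, (fun i => (hY i).2), map_zero, ← mul_assoc, ← sum_mul] at this
      exact (mul_eq_zero.mp this).resolve_right hB
    funext i
    exact Subtype.ext (congrFun (eq_zero_of_sum_mul_eq_zero hxli (fun i => (c i).2) hrel) i)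
  have := LinearMap.finrank_le_finrank_of_injective hΦ
  rw [Module.finrank_pi_fintype] at this
  simpa using this

end FunctionField

theorem stmt_5_general {k R : Type*} [Field k] [CommRing R] [IsDomain R] [Algebra k R]
    (𝒜 ℬ : ℕ → Submodule k R) [GradedAlgebra 𝒜]
    (hfg : Algebra.FiniteType k R) (r : ℕ)
    (hBA : ∀ i, ℬ i ≤ 𝒜 i)
    (hBmul : ∀ i j : ℕ, ∀ x ∈ ℬ i, ∀ y ∈ ℬ j, x * y ∈ ℬ (i + j))
    (sA sB : ℕ)
    (hsA : IsLeast {m : ℕ | 0 < m ∧ ∀ᶠ i in atTop, Module.finrank k (𝒜 (m * i)) ≠ 0} sA)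
    (hsB : IsLeast {m : ℕ | 0 < m ∧ ∀ᶠ i in atTop, Module.finrank k (ℬ (m * i)) ≠ 0} sB)
    (VA VB : ℝ)
    (hVA : Tendsto
      (fun t : ℝ => (1 - t) ^ r * ∑' i : ℕ, (Module.finrank k (𝒜 i) : ℝ) * t ^ i)
      (nhdsWithin 1 (Set.Iio 1)) (nhds VA))
    (hVB : Tendsto
      (fun t : ℝ => (1 - t) ^ r * ∑' i : ℕ, (Module.finrank k (ℬ i) : ℝ) * t ^ i)
      (nhdsWithin 1 (Set.Iio 1)) (nhds VB))
    [FiniteDimensional ↥(KP ℬ) ↥(IntermediateField.adjoin ↥(KP ℬ) (fracSet 𝒜))] :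
    (Module.finrank ↥(KP ℬ) ↥(IntermediateField.adjoin ↥(KP ℬ) (fracSet 𝒜)) : ℝ)
        * (sB : ℝ) * VB ≤ (sA : ℝ) * VA := by
  obtain ⟨i₁, hi₁⟩ := eventually_atTop.mp hsA.1.2
  have : FiniteDimensional k (𝒜 0) := finiteDimensional_zero_of_finrank_ne_zero (hi₁ i₁ le_rfl)
  have := hfg
  obtain ⟨e, hpiece⟩ := exists_finrank_le_mul_pow 𝒜
  have hBfd (n : ℕ) : FiniteDimensional k (ℬ n) :=
    have := (hpiece n).1
    Submodule.finiteDimensional_of_le (hBA n)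
  have hBsupp (n : ℕ) (hn : finrank k (ℬ n) ≠ 0) : sB ∣ n :=
    Nat.dvd_of_isLeast_eventually_mul_mem (S := {n | finrank k (ℬ n) ≠ 0})
      (fun _ hm _ hn => finrank_add_ne_zero hBmul hm hn) hsB hn
  obtain ⟨N, hN⟩ := exists_mul_finrank_le_finrank_add 𝒜 ℬ hBA fun n => (hpiece n).1
  refine mul_mul_volume_le_of_le_shift (c := N + sA * i₁) hsB.1.1 hsA.1.1 (fun n => (hpiece n).2)
    hBsupp (fun m j => ?_) hVA hVB
  have := (hpiece (sB * m + N + sA * (i₁ + j))).1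
  calc _ ≤ finrank k (𝒜 (sB * m + N)) := hN _
    _ ≤ finrank k (𝒜 (sB * m + N + sA * (i₁ + j))) := finrank_le_finrank_add (hi₁ _ (by omega)) _
    _ = _ := by rw [mul_add, ← add_assoc, add_assoc (sB * m)]

/-- For a finitely generated graded domain `A` of Krull dimension `r` and a graded subalgebra
`B ⊂ A` of the same Krull dimension with `[KP(A):KP(B)]` finite, one has
`s_A Vol(A) ≥ [KP(A):KP(B)] · s_B Vol(B)`, where `s_A, s_B` are the saturators. -/
theorem stmt_5 {k R : Type*} [Field k] [CharZero k] [CommRing R] [IsDomain R] [Algebra k R]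
    (𝒜 ℬ : ℕ → Submodule k R) [GradedAlgebra 𝒜]
    (hfg : Algebra.FiniteType k R) (r : ℕ) (hr : ringKrullDim R = r)
    (hBA : ∀ i, ℬ i ≤ 𝒜 i) (hB1 : (1 : R) ∈ ℬ 0)
    (hBmul : ∀ i j : ℕ, ∀ x ∈ ℬ i, ∀ y ∈ ℬ j, x * y ∈ ℬ (i + j))
    (sA sB : ℕ)
    (hsA : IsLeast {m : ℕ | 0 < m ∧ ∀ᶠ i in atTop, Module.finrank k (𝒜 (m * i)) ≠ 0} sA)
    (hsB : IsLeast {m : ℕ | 0 < m ∧ ∀ᶠ i in atTop, Module.finrank k (ℬ (m * i)) ≠ 0} sB)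
    (VA VB : ℝ)
    (hVA : Tendsto
      (fun t : ℝ => (1 - t) ^ r * ∑' i : ℕ, (Module.finrank k (𝒜 i) : ℝ) * t ^ i)
      (nhdsWithin 1 (Set.Iio 1)) (nhds VA))
    (hVB : Tendsto
      (fun t : ℝ => (1 - t) ^ r * ∑' i : ℕ, (Module.finrank k (ℬ i) : ℝ) * t ^ i)
      (nhdsWithin 1 (Set.Iio 1)) (nhds VB))
    [FiniteDimensional ↥(KP ℬ) ↥(IntermediateField.adjoin ↥(KP ℬ) (fracSet 𝒜))] :
    (Module.finrank ↥(KP ℬ) ↥(IntermediateField.adjoin ↥(KP ℬ) (fracSet 𝒜)) : ℝ)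
        * (sB : ℝ) * VB ≤ (sA : ℝ) * VA :=
  stmt_5_general 𝒜 ℬ hfg r hBA hBmul sA sB hsA hsB VA VB hVA hVB
end

section
/- For integers d > e ≥ 1 and n ≥ 1, the quantity (ν_n(d) - ν_n(e))/(d - e) is a nonnegative integer, where ν_n(x) = Σ_{m|n} μ(n/m) x^m. -/
/-!
Write `ν_n(d) - ν_n(e) = ∑_{m ∣ n} μ(n/m) (d^m - e^m)`. Each summand is divisible by `d - e`.
For nonnegativity the summand `m = n` dominates: with `k = n / 2`, each of the at most `k` proper
divisors `m` of `n` satisfies `m ≤ k`, so it contributes at least `-(d^k - e^k)`, and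
`k (d^k - e^k) ≤ (d^k + e^k)(d^k - e^k) ≤ d^n - e^n` because `k < 2^k ≤ d^k`.
-/

open ArithmeticFunction Finset
open scoped ArithmeticFunction.Moebius

namespace Nat

lemma le_div_two_of_mem_properDivisors {m n : ℕ} (h : m ∈ n.properDivisors) : m ≤ n / 2 := by
  obtain ⟨hdvd, -⟩ := mem_properDivisors.mp h
  rw [Nat.le_div_iff_mul_le two_pos]
  calc m * 2 ≤ m * (n / m) := Nat.mul_le_mul_left m (one_lt_div_of_mem_properDivisors h)
    _ = n := Nat.mul_div_cancel' hdvd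

lemma card_properDivisors_le_div_two (n : ℕ) : #n.properDivisors ≤ n / 2 := by
  have hsub : n.properDivisors ⊆ Icc 1 (n / 2) := fun m hm =>
    mem_Icc.mpr ⟨pos_of_mem_properDivisors hm, le_div_two_of_mem_properDivisors hm⟩
  simpa using card_le_card hsub

end Nat

section OrderedRing

variable {R : Type*} [CommRing R] [LinearOrder R] [IsStrictOrderedRing R] {d e : R}

lemma monotone_pow_sub_pow (he : 1 ≤ e) (hed : e ≤ d) : Monotone fun m : ℕ => d ^ m - e ^ m := by
  refine monotone_nat_of_le_succ fun m => ?_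
  have : e ^ m * (e - 1) ≤ d ^ m * (d - 1) :=
    mul_le_mul (pow_le_pow_left₀ (zero_le_one.trans he) hed m) (sub_le_sub_right hed 1)
      (sub_nonneg.mpr he) (pow_nonneg (zero_le_one.trans (he.trans hed)) m)
  simp only [pow_succ]
  linarith

lemma natCast_mul_pow_sub_pow_le (he : 0 ≤ e) (hed : e ≤ d) (hd : 2 ≤ d) (k : ℕ) :
    (k : R) * (d ^ k - e ^ k) ≤ d ^ (2 * k) - e ^ (2 * k) := by
  have hk : (k : R) ≤ d ^ k + e ^ k :=
    calc (k : R) ≤ 2 ^ k := by exact_mod_cast k.lt_two_pow_self.le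
      _ ≤ d ^ k := pow_le_pow_left₀ zero_le_two hd k
      _ ≤ d ^ k + e ^ k := le_add_of_nonneg_right (pow_nonneg he k)
  calc (k : R) * (d ^ k - e ^ k) ≤ (d ^ k + e ^ k) * (d ^ k - e ^ k) :=
        mul_le_mul_of_nonneg_right hk (sub_nonneg.mpr (pow_le_pow_left₀ he hed k))
    _ = d ^ (2 * k) - e ^ (2 * k) := by ring

end OrderedRing

def nu (n : ℕ) (x : ℤ) : ℤ := ∑ m ∈ n.divisors, μ (n / m) * x ^ m

lemma nu_sub_nu (n : ℕ) (d e : ℤ) :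
    nu n d - nu n e = ∑ m ∈ n.divisors, μ (n / m) * (d ^ m - e ^ m) := by
  simp only [nu, mul_sub, sum_sub_distrib]

lemma sub_dvd_nu_sub_nu (n : ℕ) (d e : ℤ) : d - e ∣ nu n d - nu n e := by
  rw [nu_sub_nu]
  exact dvd_sum fun m _ => (sub_dvd_pow_sub_pow d e m).mul_left _

lemma neg_le_sum_properDivisors_moebius_mul {d e : ℤ} (he : 1 ≤ e) (hed : e ≤ d) (n : ℕ) :
    -((n / 2 : ℕ) * (d ^ (n / 2) - e ^ (n / 2))) ≤
      ∑ m ∈ n.properDivisors, μ (n / m) * (d ^ m - e ^ m) := by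
  set k := n / 2
  have hterm : ∀ m ∈ n.properDivisors, -(d ^ k - e ^ k) ≤ μ (n / m) * (d ^ m - e ^ m) := by
    intro m hm
    have hpos : 0 ≤ d ^ m - e ^ m := sub_nonneg.mpr (pow_le_pow_left₀ (by omega) hed m)
    have hle : d ^ m - e ^ m ≤ d ^ k - e ^ k :=
      monotone_pow_sub_pow he hed (Nat.le_div_two_of_mem_properDivisors hm)
    have hμ : -1 ≤ (μ (n / m) : ℤ) := by exact_mod_cast (abs_le.mp (abs_moebius_le_one)).1
    nlinarith
  have hcard : (#n.properDivisors : ℤ) * (d ^ k - e ^ k) ≤ k * (d ^ k - e ^ k) :=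
    mul_le_mul_of_nonneg_right (by exact_mod_cast Nat.card_properDivisors_le_div_two n)
      (sub_nonneg.mpr (pow_le_pow_left₀ (by omega) hed k))
  have := card_nsmul_le_sum _ _ _ hterm
  rw [nsmul_eq_mul] at this
  linarith

lemma nu_le_nu {d e : ℤ} (he : 1 ≤ e) (hed : e < d) (n : ℕ) : nu n e ≤ nu n d := by
  rcases n.eq_zero_or_pos with rfl | hn
  · simp [nu]
  rw [← sub_nonneg, nu_sub_nu, ← Nat.cons_self_properDivisors hn.ne', sum_cons,
    Nat.div_self hn, moebius_apply_one, one_mul]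
  have hlead : ((n / 2 : ℕ) : ℤ) * (d ^ (n / 2) - e ^ (n / 2)) ≤ d ^ n - e ^ n :=
    (natCast_mul_pow_sub_pow_le (by omega) hed.le (by omega) (n / 2)).trans
      (monotone_pow_sub_pow he hed.le (by omega))
  linarith [neg_le_sum_properDivisors_moebius_mul he hed.le n]

theorem stmt_10_general (d e : ℤ) (he : 1 ≤ e) (hde : e < d) (n : ℕ) :
    ∃ q : ℤ, 0 ≤ q ∧
      (∑ m ∈ n.divisors, (μ (n / m) : ℤ) * d ^ m) - (∑ m ∈ n.divisors, (μ (n / m) : ℤ) * e ^ m)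
        = q * (d - e) := by
  obtain ⟨q, hq⟩ := sub_dvd_nu_sub_nu n d e
  have hprod : 0 ≤ (d - e) * q := hq ▸ sub_nonneg.mpr (nu_le_nu he hde n)
  exact ⟨q, nonneg_of_mul_nonneg_right hprod (sub_pos.mpr hde), hq.trans (mul_comm _ _)⟩

/-- For integers `d > e ≥ 1` and `n ≥ 1`, the quantity `(ν_n(d) - ν_n(e))/(d-e)` is a
nonnegative integer, where `ν_n(x) = Σ_{m | n} μ(n/m) x^m`. -/
theorem stmt_10 (d e : ℤ) (he : 1 ≤ e) (hde : e < d) (n : ℕ) (hn : 1 ≤ n) :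
    ∃ q : ℤ, 0 ≤ q ∧
      (∑ m ∈ n.divisors, (μ (n / m) : ℤ) * d ^ m) - (∑ m ∈ n.divisors, (μ (n / m) : ℤ) * e ^ m)
        = q * (d - e) :=
  stmt_10_general d e he hde n
end

section
/- The power series identity Σ_{i≥0} C(i+a, a)·C(i+b, b)·t^i = P(t)/(1-t)^{a+b+1} holds for some polynomial P with P(1) = (a+b)!/(a! b!), for all nonnegative integers a, b. Equivalently, lim_{t→1} (1-t)^{a+b+1} Σ_{i≥0} C(i+a,a) C(i+b,b) t^i = C(a+b, a). -/
/-!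
Vandermonde gives `C(i+a, a) = Σ_j C(a,j) C(i,j)`, and `C(i+b, b) C(i, j) = C(b+j, b) C(i+b, b+j)`.
Since `Σ_i C(i+b, b+j) tⁱ = tʲ / (1-t)^(b+j+1)`, the series equals
`P(t) / (1-t)^(a+b+1)` with `P(t) = Σ_j C(a,j) C(b+j,b) tʲ (1-t)^(a-j)`, a polynomial.
At `t = 1` only the term `j = a` of `P` survives, and it is `C(a+b, b)`.
-/

open Filter Finset Topology

namespace Nat

theorem add_choose_eq_sum_choose_mul_choose (a i : ℕ) :
    (i + a).choose a = ∑ j ∈ range (a + 1), a.choose j * i.choose j := by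
  rw [add_choose_eq, Finset.Nat.sum_antidiagonal_eq_sum_range_succ_mk]
  refine sum_congr rfl fun j hj => ?_
  rw [choose_symm (mem_range_succ_iff.mp hj), mul_comm]

theorem add_choose_mul_choose (i b j : ℕ) :
    (i + b).choose b * i.choose j = (b + j).choose b * (i + b).choose (b + j) := by
  rw [mul_comm ((b + j).choose b), choose_mul (le_add_right b j)]
  simp

end Nat

section Numerator

variable {R : Type*} [CommRing R]

/-- The numerator `P` of `Σ_i C(i+a, a) C(i+b, b) tⁱ = P(t) / (1-t)^(a+b+1)`. -/
def chooseProductNumerator (a b : ℕ) (t : R) : R :=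
  ∑ j ∈ range (a + 1), (a.choose j * (b + j).choose b : R) * t ^ j * (1 - t) ^ (a - j)

theorem chooseProductNumerator_one (a b : ℕ) :
    chooseProductNumerator a b (1 : R) = (a + b).choose a := by
  rw [chooseProductNumerator, sum_eq_single_of_mem a (self_mem_range_succ a)]
  · rw [add_comm b a, ← Nat.choose_symm_add]
    simp
  · intro j hj _
    rw [sub_self, zero_pow (by simp at hj; omega), mul_zero]

theorem continuous_chooseProductNumerator [TopologicalSpace R] [IsTopologicalRing R] (a b : ℕ) :
    Continuous (chooseProductNumerator (R := R) a b) := by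
  unfold chooseProductNumerator
  fun_prop

end Numerator

section GeneratingFunction

variable {𝕜 : Type*} [NormedField 𝕜]

theorem hasSum_add_choose_mul_geometric (b j : ℕ) {t : 𝕜} (ht : ‖t‖ < 1) :
    HasSum (fun i : ℕ => ((i + b).choose (b + j) : 𝕜) * t ^ i) (t ^ j / (1 - t) ^ (b + j + 1)) := by
  have hvanish : ∑ i ∈ range j, ((i + b).choose (b + j) : 𝕜) * t ^ i = 0 :=
    sum_eq_zero fun i hi => by
      rw [Nat.choose_eq_zero_of_lt (by simp at hi; omega), Nat.cast_zero, zero_mul]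
  rw [← hasSum_nat_add_iff' j, hvanish, sub_zero, div_eq_mul_one_div]
  have hshift : (fun i : ℕ => ((i + j + b).choose (b + j) : 𝕜) * t ^ (i + j)) =
      fun i => t ^ j * ((i + (b + j)).choose (b + j) * t ^ i) := by
    funext i
    rw [add_right_comm, add_assoc, pow_add]
    ring
  rw [hshift]
  exact (hasSum_choose_mul_geometric_of_norm_lt_one (b + j) ht).mul_left (t ^ j)

theorem hasSum_add_choose_mul_add_choose_mul_geometric (a b : ℕ) {t : 𝕜} (ht : ‖t‖ < 1) :
    HasSum (fun i : ℕ => ((i + a).choose a : 𝕜) * (i + b).choose b * t ^ i)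
      (∑ j ∈ range (a + 1),
        (a.choose j * (b + j).choose b : 𝕜) * (t ^ j / (1 - t) ^ (b + j + 1))) := by
  have hterm : ∀ i : ℕ, ((i + a).choose a : 𝕜) * (i + b).choose b * t ^ i =
      ∑ j ∈ range (a + 1),
        (a.choose j * (b + j).choose b : 𝕜) * ((i + b).choose (b + j) * t ^ i) := by
    intro i
    have hnat : (i + a).choose a * (i + b).choose b =
        ∑ j ∈ range (a + 1), a.choose j * (b + j).choose b * (i + b).choose (b + j) := by
      rw [Nat.add_choose_eq_sum_choose_mul_choose, sum_mul]
      refine sum_congr rfl fun j _ => ?_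
      rw [mul_assoc, mul_comm (i.choose j), Nat.add_choose_mul_choose, mul_assoc]
    rw [← Nat.cast_mul, hnat, Nat.cast_sum, sum_mul]
    refine sum_congr rfl fun j _ => ?_
    push_cast
    ring
  simp only [hterm]
  exact hasSum_sum fun j _ => (hasSum_add_choose_mul_geometric b j ht).mul_left _

theorem one_sub_pow_mul_tsum_eq_chooseProductNumerator (a b : ℕ) {t : 𝕜} (ht : ‖t‖ < 1) :
    (1 - t) ^ (a + b + 1) * ∑' i : ℕ, ((i + a).choose a : 𝕜) * (i + b).choose b * t ^ i =
      chooseProductNumerator a b t := by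
  have hne : 1 - t ≠ 0 := sub_ne_zero.mpr fun h => by simp [← h] at ht
  rw [(hasSum_add_choose_mul_add_choose_mul_geometric a b ht).tsum_eq, mul_sum,
    chooseProductNumerator]
  refine sum_congr rfl fun j hj => ?_
  rw [show a + b + 1 = (a - j) + (b + j + 1) by simp at hj; omega, pow_add]
  field_simp

end GeneratingFunction

/-- `lim_{t→1⁻} (1-t)^{a+b+1} Σ_{i≥0} C(i+a,a) C(i+b,b) t^i = C(a+b, a)`. -/
theorem stmt_13 (a b : ℕ) :
    Tendsto
      (fun t : ℝ => (1 - t) ^ (a + b + 1) *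
        ∑' i : ℕ, ((i + a).choose a : ℝ) * ((i + b).choose b : ℝ) * t ^ i)
      (nhdsWithin 1 (Set.Iio 1)) (nhds ((a + b).choose a : ℝ)) := by
  have hP : Tendsto (chooseProductNumerator a b) (𝓝[<] (1 : ℝ)) (𝓝 ((a + b).choose a : ℝ)) := by
    rw [← chooseProductNumerator_one a b]
    exact (continuous_chooseProductNumerator a b).continuousAt.continuousWithinAt.tendsto
  refine hP.congr' ?_
  filter_upwards [Ioo_mem_nhdsLT (show (-1 : ℝ) < 1 by norm_num)] with t ht
  exact (one_sub_pow_mul_tsum_eq_chooseProductNumerator a b (abs_lt.mpr ht)).symm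
end
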